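/- arXiv:math/0511263 — 6 statements merged into one kernel-verified Lean document; each statement's English description precedes it below -/
import Mathlib

section
/- Let Γ = ⊕_{i∈I} Γ_i be a direct sum of cyclic groups indexed by a totally ordered set I, and Z an abelian group. Then the homomorphism Φ : H²(Γ,Z) → Alt²(Γ,Z), [f] ↦ λ_f, is surjective; in fact, for each alternating biadditive η : Γ × Γ → Z there exists a biadditive 2-cocycle f_η with λ_{f_η} = η, defined by f_η(γ_i,γ_j) = η(γ_i,γ_j) for i > j and f_η(γ_i,γ_j) = 0 for i ≤ j (γ_i ∈ Γ_i, γ_j ∈ Γ_j). -/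
open DirectSum

/-- If `Γ = ⊕_{i ∈ I} Γ_i` is a direct sum of cyclic groups over a totally ordered
index set, then `Φ : H²(Γ,Z) → Alt²(Γ,Z)` is surjective: every alternating biadditive
`η` equals `λ_f` for a biadditive 2-cocycle `f` which vanishes on pairs
`(γ_i, γ_j)` with `i ≤ j` and agrees with `η` on pairs with `i > j`. -/
theorem Phi_surjective_directSum_cyclic
    {I : Type*} [LinearOrder I] [DecidableEq I]
    (G : I → Type*) [∀ i, AddCommGroup (G i)] [∀ i, IsAddCyclic (G i)]
    {Z : Type*} [AddCommGroup Z]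
    (η : (⨁ i, G i) → (⨁ i, G i) → Z)
    (hη₁ : ∀ a b c, η (a + b) c = η a c + η b c)
    (hη₂ : ∀ a b c, η a (b + c) = η a b + η a c)
    (hη₃ : ∀ a, η a a = 0) :
    ∃ f : (⨁ i, G i) → (⨁ i, G i) → Z,
      (∀ a b c, f (a + b) c = f a c + f b c) ∧
      (∀ a b c, f a (b + c) = f a b + f a c) ∧
      (∀ a b, f a b - f b a = η a b) ∧
      (∀ (i j : I) (x : G i) (y : G j), j < i →
        f (DirectSum.of G i x) (DirectSum.of G j y)
          = η (DirectSum.of G i x) (DirectSum.of G j y)) ∧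
      (∀ (i j : I) (x : G i) (y : G j), i ≤ j →
        f (DirectSum.of G i x) (DirectSum.of G j y) = 0) := by
  classical
  -- η as a bundled biadditive map
  set η' : (⨁ i, G i) →+ (⨁ i, G i) →+ Z :=
    AddMonoidHom.mk' (fun a => AddMonoidHom.mk' (η a) (hη₂ a))
      (fun a b => AddMonoidHom.ext fun c => hη₁ a b c) with hη'def
  have η'app : ∀ a b, η' a b = η a b := fun a b => rfl
  -- the componentwise maps
  set g : ∀ i j, G i →+ G j →+ Z := fun i j =>
    if j < i then
      ((η'.comp (DirectSum.of G i)).flip.comp (DirectSum.of G j)).flip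
    else 0 with hgdef
  have hglt : ∀ (i j : I) (x : G i) (y : G j), j < i →
      g i j x y = η (DirectSum.of G i x) (DirectSum.of G j y) := by
    intro i j x y h
    simp only [hgdef, if_pos h, AddMonoidHom.flip_apply, AddMonoidHom.comp_apply]
    exact η'app _ _
  have hgle : ∀ (i j : I) (x : G i) (y : G j), i ≤ j → g i j x y = 0 := by
    intro i j x y h
    simp [hgdef, if_neg (not_lt.mpr h)]
  -- the bundled biadditive f
  set F : (⨁ i, G i) →+ (⨁ i, G i) →+ Z :=
    DirectSum.toAddMonoid (fun i =>
      (DirectSum.toAddMonoid (fun j => (g i j).flip)).flip) with hFdef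
  have hFof : ∀ (i j : I) (x : G i) (y : G j),
      F (DirectSum.of G i x) (DirectSum.of G j y) = g i j x y := by
    intro i j x y
    simp [hFdef, DirectSum.toAddMonoid_of]
  -- antisymmetry of η
  have hanti : ∀ a b, η b a = - η a b := by
    intro a b
    have h := hη₃ (a + b)
    rw [hη₁, hη₂, hη₂, hη₃, hη₃] at h
    have h2 : η a b + η b a = 0 := by rw [← h]; abel
    exact eq_neg_of_add_eq_zero_right h2
  -- diagonal vanishing, using cyclicity
  have hdiag : ∀ (i : I) (x y : G i),
      η (DirectSum.of G i x) (DirectSum.of G i y) = 0 := by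
    intro i x y
    obtain ⟨g₀, hg₀⟩ := IsAddCyclic.exists_generator (α := G i)
    obtain ⟨m, hm⟩ := hg₀ x
    obtain ⟨n, hn⟩ := hg₀ y
    have hx : DirectSum.of G i x = m • DirectSum.of G i g₀ := by
      rw [← hm, map_zsmul]
    have hy : DirectSum.of G i y = n • DirectSum.of G i g₀ := by
      rw [← hn, map_zsmul]
    calc η (DirectSum.of G i x) (DirectSum.of G i y)
        = η' (m • DirectSum.of G i g₀) (n • DirectSum.of G i g₀) := by
          rw [η'app, hx, hy]
      _ = m • n • η' (DirectSum.of G i g₀) (DirectSum.of G i g₀) := by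
          rw [map_zsmul η' m, AddMonoidHom.smul_apply, map_zsmul]
      _ = 0 := by rw [η'app, hη₃]; simp
  -- the key identity as an equality of bundled maps
  have hmain : F - F.flip = η' := by
    refine DirectSum.addHom_ext fun i x => AddMonoidHom.ext ?_
    refine fun b => ?_
    have : ∀ j (y : G j),
        (F - F.flip) (DirectSum.of G i x) (DirectSum.of G j y)
          = η' (DirectSum.of G i x) (DirectSum.of G j y) := by
      intro j y
      have hFF : (F - F.flip) (DirectSum.of G i x) (DirectSum.of G j y)
          = F (DirectSum.of G i x) (DirectSum.of G j y)
            - F (DirectSum.of G j y) (DirectSum.of G i x) := by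
        simp [AddMonoidHom.sub_apply]
      rw [hFF, hFof, hFof, η'app]
      rcases lt_trichotomy i j with hij | hij | hij
      · rw [hgle i j x y hij.le, hglt j i y x hij, hanti]
        abel
      · subst hij
        rw [hgle i i x y le_rfl, hgle i i y x le_rfl, hdiag]
        abel
      · rw [hglt i j x y hij, hgle j i y x hij.le]
        abel
    -- extend from generators to all b by additivity
    have h2 : ((F - F.flip) (DirectSum.of G i x)) = (η' (DirectSum.of G i x)) := by
      refine DirectSum.addHom_ext fun j y => this j y
    exact congrFun (congrArg DFunLike.coe h2) b
  refine ⟨fun a b => F a b, ?_, ?_, ?_, ?_, ?_⟩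
  · intro a b c
    show F (a + b) c = F a c + F b c
    rw [map_add]; rfl
  · intro a b c
    show F a (b + c) = F a b + F a c
    exact map_add _ _ _
  · intro a b
    have h := DFunLike.congr_fun (DFunLike.congr_fun hmain a) b
    simpa [AddMonoidHom.sub_apply, η'app] using h
  · intro i j x y h
    show F (DirectSum.of G i x) (DirectSum.of G j y) = _
    rw [hFof, hglt i j x y h]
  · intro i j x y h
    show F (DirectSum.of G i x) (DirectSum.of G j y) = 0
    rw [hFof, hgle i j x y h]
end

section
/- If Γ is a finitely generated free abelian group and Z an abelian group, then Φ : H²(Γ,Z) → Alt²(Γ,Z), [f] ↦ λ_f, is an isomorphism of abelian groups; in particular every cohomology class in H²(Γ,Z) has a biadditive representative, and a 2-cocycle on Γ is a coboundary if and only if it is symmetric. -/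
/-!
A symmetric 2-cocycle `f` on `Γ` turns `Z × Γ` into an abelian group, an extension of `Γ` by `Z`;
since `Γ` is projective this extension splits, and the `Z`-component of a splitting is a cochain
whose coboundary is `f`. So `Φ` is injective. For surjectivity and biadditive representatives,
pick a basis `e` of `Γ` indexed by a linearly ordered set: the "upper triangular" biadditive map
with `D (e i) (e j) = η (e i) (e j)` for `i < j` and `0` otherwise satisfies `λ_D = η` whenever
`η` is alternating, because `λ_D` and `η` are biadditive and agree on pairs of basis vectors.
-/

section

variable {Γ Z : Type*} [AddCommGroup Γ] [AddCommGroup Z]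

def IsTwoCocycle (f : Γ → Γ → Z) : Prop :=
  ∀ a b c, f a b + f (a + b) c = f a (b + c) + f b c

def IsTwoCoboundary (f : Γ → Γ → Z) : Prop :=
  ∃ h : Γ → Z, ∀ a b, f a b = h a - h (a + b) + h b

structure IsBiadditive (η : Γ → Γ → Z) : Prop where
  add_left : ∀ a b c, η (a + b) c = η a c + η b c
  add_right : ∀ a b c, η a (b + c) = η a b + η a c

lemma LinearMap.isBiadditive (B : Γ →ₗ[ℤ] Γ →ₗ[ℤ] Z) : IsBiadditive fun a b => B a b :=
  ⟨fun a b c => by simp, fun a b c => by simp⟩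

namespace IsBiadditive

variable {η : Γ → Γ → Z}

def toLinearMap₂ (hη : IsBiadditive η) : Γ →ₗ[ℤ] Γ →ₗ[ℤ] Z :=
  (AddMonoidHom.mk' (fun a => (AddMonoidHom.mk' (η a) (hη.add_right a)).toIntLinearMap)
    fun a b => by ext c; exact hη.add_left a b c).toIntLinearMap

@[simp] lemma toLinearMap₂_apply (hη : IsBiadditive η) (a b : Γ) :
    hη.toLinearMap₂ a b = η a b := rfl

lemma isTwoCocycle (hη : IsBiadditive η) : IsTwoCocycle η := by
  intro a b c
  rw [hη.add_left, hη.add_right]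
  abel

lemma swap_eq_neg (hη : IsBiadditive η) (h0 : ∀ a, η a a = 0) (a b : Γ) :
    η b a = -η a b := by
  have h := h0 (a + b)
  rw [hη.add_left, hη.add_right, hη.add_right, h0, h0, zero_add, add_zero] at h
  exact eq_neg_of_add_eq_zero_right h

theorem exists_isBiadditive_sub_swap_eq {ι : Type*} [LinearOrder ι] (bΓ : Module.Basis ι ℤ Γ)
    (hη : IsBiadditive η) (h0 : ∀ a, η a a = 0) :
    ∃ D : Γ → Γ → Z, IsBiadditive D ∧ ∀ a b, D a b - D b a = η a b := by
  let D : Γ →ₗ[ℤ] Γ →ₗ[ℤ] Z := bΓ.constr ℤ fun i =>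
    bΓ.constr ℤ fun j => if i < j then η (bΓ i) (bΓ j) else 0
  have hD : D - D.flip = hη.toLinearMap₂ := by
    refine LinearMap.ext_basis bΓ bΓ fun i j => ?_
    simp only [LinearMap.sub_apply, LinearMap.flip_apply, D, Module.Basis.constr_basis,
      toLinearMap₂_apply]
    rcases lt_trichotomy i j with h | rfl | h
    · simp [h, not_lt_of_gt h]
    · simp [h0]
    · simp [h, not_lt_of_gt h, hη.swap_eq_neg h0 (bΓ i)]
  exact ⟨fun a b => D a b, D.isBiadditive, fun a b => congr($hD a b)⟩

end IsBiadditive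

namespace IsTwoCocycle

variable {f g : Γ → Γ → Z}

lemma sub (hf : IsTwoCocycle f) (hg : IsTwoCocycle g) : IsTwoCocycle (f - g) := by
  intro a b c
  simp only [Pi.sub_apply]
  rw [sub_add_sub_comm, sub_add_sub_comm, hf, hg]

lemma zero_left (hf : IsTwoCocycle f) (c : Γ) : f 0 c = f 0 0 := by
  simpa using (hf 0 0 c).symm

lemma zero_right (hf : IsTwoCocycle f) (a : Γ) : f a 0 = f 0 0 := by
  simpa using hf a 0 0

lemma sub_swap_add_left (hf : IsTwoCocycle f) (a b c : Γ) :
    f (a + b) c - f c (a + b) = (f a c - f c a) + (f b c - f c b) := by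
  have hacb := hf a c b
  rw [add_comm c b] at hacb
  rw [eq_sub_of_add_eq' (hf a b c), eq_sub_of_add_eq (hf c a b).symm,
    eq_sub_of_add_eq hacb.symm, add_comm c a]
  abel

lemma isBiadditive_sub_swap (hf : IsTwoCocycle f) : IsBiadditive fun a b => f a b - f b a where
  add_left := hf.sub_swap_add_left
  add_right a b c := by
    rw [← neg_sub, hf.sub_swap_add_left]
    abel

end IsTwoCocycle

lemma IsTwoCoboundary.symm {f : Γ → Γ → Z} (hf : IsTwoCoboundary f) (a b : Γ) :
    f a b = f b a := by
  obtain ⟨h, hh⟩ := hf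
  rw [hh, hh, add_comm b a]
  abel

@[ext] structure CocycleExt (f : Γ → Γ → Z) where
  z : Z
  v : Γ

namespace CocycleExt

variable {f : Γ → Γ → Z}

instance : Add (CocycleExt f) := ⟨fun x y => ⟨x.z + y.z + f x.v y.v, x.v + y.v⟩⟩

-- `f` need not vanish at `(0, 0)`, so the neutral element is `(-f 0 0, 0)` rather than `(0, 0)`.
instance : Zero (CocycleExt f) := ⟨⟨-f 0 0, 0⟩⟩

instance : Neg (CocycleExt f) := ⟨fun x => ⟨-x.z - f 0 0 - f x.v (-x.v), -x.v⟩⟩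

@[simp] lemma add_z (x y : CocycleExt f) : (x + y).z = x.z + y.z + f x.v y.v := rfl
@[simp] lemma add_v (x y : CocycleExt f) : (x + y).v = x.v + y.v := rfl
@[simp] lemma zero_z : (0 : CocycleExt f).z = -f 0 0 := rfl
@[simp] lemma zero_v : (0 : CocycleExt f).v = 0 := rfl
@[simp] lemma neg_z (x : CocycleExt f) : (-x).z = -x.z - f 0 0 - f x.v (-x.v) := rfl
@[simp] lemma neg_v (x : CocycleExt f) : (-x).v = -x.v := rfl

abbrev addCommGroup (hf : IsTwoCocycle f) (hs : ∀ a b, f a b = f b a) :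
    AddCommGroup (CocycleExt f) where
  nsmul := nsmulRec
  zsmul := zsmulRec
  add_assoc x y w := by
    ext
    · simp only [add_z, add_v]
      rw [eq_sub_of_add_eq' (hf x.v y.v w.v)]
      abel
    · exact add_assoc _ _ _
  zero_add x := by ext <;> simp [hf.zero_left]
  add_zero x := by ext <;> simp [hf.zero_right]
  neg_add_cancel x := by ext <;> simp [hs (-x.v)]; abel
  add_comm x y := by ext <;> simp [hs x.v, add_comm]

end CocycleExt

theorem IsTwoCocycle.isTwoCoboundary_of_symm [Module.Projective ℤ Γ] {f : Γ → Γ → Z}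
    (hf : IsTwoCocycle f) (hs : ∀ a b, f a b = f b a) : IsTwoCoboundary f := by
  let _ := CocycleExt.addCommGroup hf hs
  let π : CocycleExt f →ₗ[ℤ] Γ := (AddMonoidHom.mk' CocycleExt.v fun _ _ => rfl).toIntLinearMap
  obtain ⟨s, hπs⟩ := Module.projective_lifting_property π LinearMap.id fun a => ⟨⟨0, a⟩, rfl⟩
  have hv (a : Γ) : (s a).v = a := congr($hπs a)
  refine ⟨fun a => -(s a).z, fun a b => ?_⟩
  have hz := congrArg CocycleExt.z (map_add s a b)
  rw [CocycleExt.add_z, hv, hv] at hz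
  dsimp only
  rw [hz]
  abel

theorem IsTwoCocycle.exists_isBiadditive_isTwoCoboundary_sub {ι : Type*} [LinearOrder ι]
    (bΓ : Module.Basis ι ℤ Γ) {f : Γ → Γ → Z} (hf : IsTwoCocycle f) :
    ∃ D : Γ → Γ → Z, IsBiadditive D ∧ IsTwoCoboundary (f - D) := by
  have := Module.Free.of_basis bΓ
  obtain ⟨D, hD, hDf⟩ :=
    hf.isBiadditive_sub_swap.exists_isBiadditive_sub_swap_eq bΓ fun a => sub_self _
  refine ⟨D, hD, (hf.sub hD.isTwoCocycle).isTwoCoboundary_of_symm fun a b => ?_⟩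
  simp only [Pi.sub_apply]
  rw [sub_eq_sub_iff_sub_eq_sub]
  exact (hDf a b).symm

end

/-- For a finitely generated free abelian group `Γ = ℤⁿ`, the map
`Φ : H²(Γ,Z) → Alt²(Γ,Z)` is an isomorphism: it is surjective (every alternating
biadditive map is `λ_f` for some cocycle), every cohomology class has a biadditive
representative, and a 2-cocycle is a coboundary if and only if it is symmetric
(injectivity of `Φ`). -/
theorem Phi_iso_free_abelian (n : ℕ) {Z : Type*} [AddCommGroup Z] :
    (∀ η : (Fin n → ℤ) → (Fin n → ℤ) → Z,
      (∀ a b c, η (a + b) c = η a c + η b c) →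
      (∀ a b c, η a (b + c) = η a b + η a c) →
      (∀ a, η a a = 0) →
      ∃ f : (Fin n → ℤ) → (Fin n → ℤ) → Z,
        (∀ a b c, f a b + f (a + b) c = f a (b + c) + f b c) ∧
        (∀ a b, f a b - f b a = η a b)) ∧
    (∀ f : (Fin n → ℤ) → (Fin n → ℤ) → Z,
      (∀ a b c, f a b + f (a + b) c = f a (b + c) + f b c) →
      ∃ g : (Fin n → ℤ) → (Fin n → ℤ) → Z,
        (∀ a b c, g (a + b) c = g a c + g b c) ∧
        (∀ a b c, g a (b + c) = g a b + g a c) ∧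
        (∃ h : (Fin n → ℤ) → Z, ∀ a b, f a b - g a b = h a - h (a + b) + h b)) ∧
    (∀ f : (Fin n → ℤ) → (Fin n → ℤ) → Z,
      (∀ a b c, f a b + f (a + b) c = f a (b + c) + f b c) →
      ((∃ h : (Fin n → ℤ) → Z, ∀ a b, f a b = h a - h (a + b) + h b) ↔
        (∀ a b, f a b = f b a))) := by
  let bΓ := Pi.basisFun ℤ (Fin n)
  refine ⟨fun η h1 h2 h0 => ?_, fun f hf => ?_,
    fun f hf => ⟨IsTwoCoboundary.symm, IsTwoCocycle.isTwoCoboundary_of_symm hf⟩⟩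
  · obtain ⟨D, hD, hDη⟩ := IsBiadditive.exists_isBiadditive_sub_swap_eq bΓ ⟨h1, h2⟩ h0
    exact ⟨D, hD.isTwoCocycle, hDη⟩
  · obtain ⟨D, hD, hfD⟩ := IsTwoCocycle.exists_isBiadditive_isTwoCoboundary_sub bΓ hf
    exact ⟨D, hD.add_left, hD.add_right, hfD⟩
end

section
/- Let Z = ℤ/(mℤ) be a cyclic group viewed as a commutative ring. Under the action of GL_n(Z) × GL_n(Z) on M_n(Z) given by (g,h).A = gAh⁻¹, each orbit contains a unique diagonal matrix diag(h_1,…,h_n) with h_i ∈ P and h_1 | h_2 | … | h_n, where P is the fixed multiplicatively closed set of representatives of the Z^×-cosets (for m = p_1^{ℓ_1}⋯p_k^{ℓ_k}, P = { p̄_1^{j_1}⋯p̄_k^{j_k} : 0 ≤ j_i ≤ ℓ_i }). -/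
/-!
Existence is the Euclidean algorithm, with `ZMod.val` as the Euclidean measure. Among the
matrices equivalent to `A`, take one whose `(0, 0)` entry is nonzero of minimal measure. That
entry divides its row and column, since otherwise a column operation followed by a swap would
give a smaller one. After clearing its row and column it also divides every other entry, since
adding a row to row `0` does not change the pivot. It therefore splits off as a `1 × 1` block
dividing the rest. Multiplying by diagonal unit matrices then moves the entries into `P`.

Uniqueness is a counting argument. In `ZMod m` every principal ideal `(a)` is an annihilator
`{y | r * y = 0}`. Let `diag d` and `diag e` be equivalent divisibility chains with `e i ∣ d i`
for `i < k`, and let `r` annihilate exactly the multiples of `d k`. Then the kernel of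
`r • diag e` is contained in the kernel of `r • diag d`. Equivalent matrices have kernels of the
same size, so the two kernels are equal. The `k`-th unit vector lies in both, so `d k ∣ e k`.
Elements of `ZMod m` that divide each other are associated, so they are equal when both lie
in `P`.
-/

def IsEuclideanMeasure {R : Type*} [CommRing R] (μ : R → ℕ) : Prop :=
  ∀ a b : R, a ≠ 0 → ¬a ∣ b → ∃ q, μ (b - q * a) < μ a

open Matrix

namespace Matrix

variable {R : Type*} [CommRing R] {ι : Type*} [Fintype ι] [DecidableEq ι]

def Equivalent (A B : Matrix ι ι R) : Prop :=
  ∃ g h : (Matrix ι ι R)ˣ, (g : Matrix ι ι R) * A * h = B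

namespace Equivalent

@[refl]
theorem refl (A : Matrix ι ι R) : Equivalent A A := ⟨1, 1, by simp⟩

@[symm]
theorem symm {A B : Matrix ι ι R} (h : Equivalent A B) : Equivalent B A := by
  obtain ⟨g, u, rfl⟩ := h
  refine ⟨g⁻¹, u⁻¹, ?_⟩
  simp [Matrix.mul_assoc]

@[trans]
theorem trans {A B C : Matrix ι ι R} (h₁ : Equivalent A B) (h₂ : Equivalent B C) :
    Equivalent A C := by
  obtain ⟨g₁, u₁, rfl⟩ := h₁
  obtain ⟨g₂, u₂, rfl⟩ := h₂
  exact ⟨g₂ * g₁, u₁ * u₂, by simp only [Units.val_mul, Matrix.mul_assoc]⟩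

end Equivalent

theorem equivalent_mul_mul {U V : Matrix ι ι R} (hU : IsUnit U) (hV : IsUnit V)
    (A : Matrix ι ι R) : Equivalent A (U * A * V) := by
  obtain ⟨g, rfl⟩ := hU
  obtain ⟨h, rfl⟩ := hV
  exact ⟨g, h, rfl⟩

theorem equivalent_submatrix (σ τ : Equiv.Perm ι) (A : Matrix ι ι R) :
    Equivalent A (A.submatrix σ τ) := by
  have hperm (π : Equiv.Perm ι) : IsUnit (π.permMatrix R) := by
    rw [isUnit_iff_isUnit_det, det_permutation]
    exact (Equiv.Perm.sign π).isUnit.map (Int.castRingHom R)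
  simpa [PEquiv.toMatrix_toPEquiv_mul, PEquiv.mul_toMatrix_toPEquiv] using
    equivalent_mul_mul (hperm σ) (hperm τ.symm) A

theorem isUnit_transvection {i j : ι} (hij : i ≠ j) (c : R) : IsUnit (transvection i j c) := by
  simp [isUnit_iff_isUnit_det, det_transvection_of_ne _ _ hij]

namespace Equivalent

variable {A B : Matrix ι ι R}

theorem transpose (h : Equivalent A B) : Equivalent Aᵀ Bᵀ := by
  obtain ⟨g, u, rfl⟩ := h
  simpa [Matrix.transpose_mul, Matrix.mul_assoc] using
    equivalent_mul_mul ((isUnit_transpose _).mpr u.isUnit) ((isUnit_transpose _).mpr g.isUnit) Aᵀ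

theorem smul (h : Equivalent A B) (r : R) : Equivalent (r • A) (r • B) := by
  obtain ⟨g, u, rfl⟩ := h
  exact ⟨g, u, by rw [Matrix.mul_smul, Matrix.smul_mul]⟩

theorem dvd_apply {a : R} (h : Equivalent A B) (hA : ∀ i j, a ∣ A i j) (i j : ι) : a ∣ B i j := by
  choose A' hA' using hA
  obtain ⟨g, u, rfl⟩ := h
  have : A = a • Matrix.of A' := by ext i j; simp [hA']
  rw [this, Matrix.mul_smul, Matrix.smul_mul, smul_apply, smul_eq_mul]
  exact dvd_mul_right _ _

theorem ncard_ker_eq (h : Equivalent A B) :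
    {x | A *ᵥ x = 0}.ncard = {x | B *ᵥ x = 0}.ncard := by
  obtain ⟨g, u, rfl⟩ := h
  let e : (ι → R) ≃ (ι → R) :=
    ⟨((u : Matrix ι ι R) *ᵥ ·), ((↑u⁻¹ : Matrix ι ι R) *ᵥ ·),
      fun x => by simp [mulVec_mulVec], fun x => by simp [mulVec_mulVec]⟩
  rw [← Nat.card_coe_set_eq, ← Nat.card_coe_set_eq]
  refine Nat.card_congr (e.subtypeEquiv fun x => ?_).symm
  change ((g : Matrix ι ι R) * A * (u : Matrix ι ι R)) *ᵥ x = 0 ↔ A *ᵥ ((u : Matrix ι ι R) *ᵥ x) = 0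
  rw [← mulVec_mulVec, ← mulVec_mulVec]
  constructor
  · intro h
    simpa [mulVec_mulVec] using congrArg ((↑g⁻¹ : Matrix ι ι R) *ᵥ ·) h
  · intro h
    rw [h, mulVec_zero]

end Equivalent

theorem Equivalent.reindex {κ : Type*} [Fintype κ] [DecidableEq κ] {A B : Matrix ι ι R}
    (e : ι ≃ κ) (h : Equivalent A B) : Equivalent (reindex e e A) (reindex e e B) := by
  obtain ⟨g, u, rfl⟩ := h
  let f := (reindexAlgEquiv R R e).toMonoidHom
  exact ⟨Units.map f g, Units.map f u, by simp [f]⟩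

theorem Equivalent.fromBlocks {κ : Type*} [Fintype κ] [DecidableEq κ] (a : Matrix κ κ R)
    {C D : Matrix ι ι R} (h : Equivalent C D) :
    Equivalent (fromBlocks a 0 0 C) (fromBlocks a 0 0 D) := by
  obtain ⟨g, u, rfl⟩ := h
  have hunit (v : (Matrix ι ι R)ˣ) :
      IsUnit (Matrix.fromBlocks (1 : Matrix κ κ R) 0 0 (v : Matrix ι ι R)) := by
    simp
  simpa [fromBlocks_multiply] using
    equivalent_mul_mul (hunit g) (hunit u) (Matrix.fromBlocks a 0 0 C)

def IsMinimalPivot (μ : R → ℕ) (p : ι) (B : Matrix ι ι R) : Prop :=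
  B p p ≠ 0 ∧ ∀ C, Equivalent B C → C p p ≠ 0 → μ (B p p) ≤ μ (C p p)

theorem exists_isMinimalPivot (μ : R → ℕ) (p : ι) {A : Matrix ι ι R} (hA : A ≠ 0) :
    ∃ B, Equivalent A B ∧ IsMinimalPivot μ p B := by
  classical
  obtain ⟨i, j, hij⟩ : ∃ i j, A i j ≠ 0 := by
    by_contra! h
    exact hA (Matrix.ext h)
  have hex : ∃ k, ∃ B, Equivalent A B ∧ B p p ≠ 0 ∧ μ (B p p) = k :=
    ⟨_, _, equivalent_submatrix (Equiv.swap p i) (Equiv.swap p j) A, by simpa using hij, rfl⟩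
  obtain ⟨B, hAB, hB, hBk⟩ := Nat.find_spec hex
  exact ⟨B, hAB, hB, fun C hBC hC => hBk ▸ Nat.find_min' hex ⟨C, hAB.trans hBC, hC, rfl⟩⟩

namespace IsMinimalPivot

variable {μ : R → ℕ} {p : ι} {B C : Matrix ι ι R}

theorem of_equivalent (hB : IsMinimalPivot μ p B) (hBC : Equivalent B C) (hp : C p p = B p p) :
    IsMinimalPivot μ p C :=
  ⟨hp ▸ hB.1, fun D hCD hD => hp ▸ hB.2 D (hBC.trans hCD) hD⟩

theorem transpose (hB : IsMinimalPivot μ p B) : IsMinimalPivot μ p Bᵀ :=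
  ⟨hB.1, fun C hBC hC => hB.2 Cᵀ (by simpa using hBC.transpose) hC⟩

theorem dvd_row (hμ : IsEuclideanMeasure μ) (hB : IsMinimalPivot μ p B) (j : ι) :
    B p p ∣ B p j := by
  by_contra hdvd
  have hj : p ≠ j := by
    rintro rfl
    exact hdvd dvd_rfl
  obtain ⟨q, hq⟩ := hμ _ _ hB.1 hdvd
  -- subtract `q` times column `p` from column `j`, then swap these two columns
  set C := (B * transvection p j (-q)).submatrix id (Equiv.swap p j)
  have hCp : C p p = B p j - q * B p p := by
    simp [C, mul_transvection_apply_same]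
    ring
  have hBC : Equivalent B C := by
    simpa using (equivalent_mul_mul isUnit_one (isUnit_transvection hj (-q)) B).trans
      (equivalent_submatrix 1 (Equiv.swap p j) _)
  have hC : C p p ≠ 0 := by
    rw [hCp]
    intro h
    exact hdvd ⟨q, by linear_combination h⟩
  have := hB.2 C hBC hC
  rw [hCp] at this
  omega

theorem dvd_col (hμ : IsEuclideanMeasure μ) (hB : IsMinimalPivot μ p B) (i : ι) :
    B p p ∣ B i p := by
  simpa using hB.transpose.dvd_row hμ i

theorem dvd_of_col_eq_zero (hμ : IsEuclideanMeasure μ) (hB : IsMinimalPivot μ p B)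
    (hcol : ∀ i ≠ p, B i p = 0) (i j : ι) : B p p ∣ B i j := by
  obtain rfl | hi := eq_or_ne i p
  · exact hB.dvd_row hμ j
  -- adding row `i` to row `p` keeps the pivot
  have hT : IsMinimalPivot μ p (transvection p i 1 * B) :=
    hB.of_equivalent
      (by simpa using equivalent_mul_mul (isUnit_transvection hi.symm 1) isUnit_one B)
      (by simp [transvection_mul_apply_same, hcol i hi])
  have := hT.dvd_row hμ j
  simp only [transvection_mul_apply_same, hcol i hi, one_mul, add_zero] at this
  exact (dvd_add_right (hB.dvd_row hμ j)).mp this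

end IsMinimalPivot

theorem exists_equivalent_col_eq_zero {B : Matrix ι ι R} (p : ι) (hdvd : ∀ i, B p p ∣ B i p) :
    ∃ C, Equivalent B C ∧ (∀ j, C p j = B p j) ∧ ∀ i ≠ p, C i p = 0 := by
  choose u hu using hdvd
  set w : ι → R := fun i => if i = p then 0 else -u i
  set N : Matrix ι ι R := vecMulVec w (Pi.single p 1)
  have hN : IsNilpotent N := ⟨2, by simp [N, w, pow_two, vecMulVec_mul_vecMulVec]⟩
  have hNB (i j : ι) : ((1 + N) * B) i j = B i j + w i * B p j := by
    simp [N, Matrix.add_mul, vecMulVec_mul, vecMulVec_apply]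
  refine ⟨(1 + N) * B, by simpa using equivalent_mul_mul hN.isUnit_one_add isUnit_one B,
    fun j => by simp [hNB, w], fun i hi => ?_⟩
  rw [hNB, hu i]
  simp only [w, if_neg hi]
  ring

theorem exists_equivalent_row_eq_zero {B : Matrix ι ι R} (p : ι) (hdvd : ∀ j, B p p ∣ B p j) :
    ∃ C, Equivalent B C ∧ (∀ i, C i p = B i p) ∧ ∀ j ≠ p, C p j = 0 := by
  obtain ⟨C, hBC, hrow, hcol⟩ := exists_equivalent_col_eq_zero (B := Bᵀ) p hdvd
  exact ⟨Cᵀ, by simpa using hBC.transpose, hrow, hcol⟩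

theorem exists_equivalent_pivot {μ : R → ℕ} (hμ : IsEuclideanMeasure μ) (p : ι)
    (A : Matrix ι ι R) : ∃ B, Equivalent A B ∧ (∀ j ≠ p, B p j = 0) ∧ (∀ i ≠ p, B i p = 0) ∧
      ∀ i j, B p p ∣ B i j := by
  obtain rfl | hA := eq_or_ne A 0
  · exact ⟨0, .refl 0, by simp⟩
  obtain ⟨B, hAB, hB⟩ := exists_isMinimalPivot μ p hA
  obtain ⟨B₁, hBB₁, hrow₁, hcol₁⟩ := exists_equivalent_col_eq_zero p (hB.dvd_col hμ)
  have hdvd₁ := (hB.of_equivalent hBB₁ (hrow₁ p)).dvd_of_col_eq_zero hμ hcol₁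
  obtain ⟨B₂, hB₁B₂, hcol₂, hrow₂⟩ := exists_equivalent_row_eq_zero p (hdvd₁ p)
  refine ⟨B₂, hAB.trans (hBB₁.trans hB₁B₂), hrow₂, fun i hi => (hcol₂ i).trans (hcol₁ i hi),
    fun i j => ?_⟩
  rw [hcol₂ p]
  exact hB₁B₂.dvd_apply hdvd₁ i j

theorem equivalent_diagonal_cons {n : ℕ} {B : Matrix (Fin (n + 1)) (Fin (n + 1)) R}
    {d : Fin n → R} (hrow : ∀ j ≠ 0, B 0 j = 0) (hcol : ∀ i ≠ 0, B i 0 = 0)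
    (h : Equivalent (B.submatrix Fin.succ Fin.succ) (diagonal d)) :
    Equivalent B (diagonal (Fin.cons (B 0 0) d)) := by
  let e : Fin 1 ⊕ Fin n ≃ Fin (n + 1) := finSumFinEquiv.trans (finCongr (Nat.add_comm 1 n))
  have he₀ (i : Fin 1) : e (.inl i) = 0 := Fin.ext (by simp [e])
  have he (i : Fin n) : e (.inr i) = i.succ := Fin.ext (by simp [e])
  have hB : reindex e.symm e.symm B =
      Matrix.fromBlocks (diagonal fun _ => B 0 0) 0 0 (B.submatrix Fin.succ Fin.succ) := by
    ext (i | i) (j | j) <;> simp [he₀, he, hrow, hcol, Fin.fin_one_eq_zero]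
  have hD : reindex e.symm e.symm (diagonal (Fin.cons (B 0 0) d)) =
      Matrix.fromBlocks (diagonal fun _ => B 0 0) 0 0 (diagonal d) := by
    ext (i | i) (j | j) <;>
      simp [he₀, he, diagonal_apply, Fin.fin_one_eq_zero, eq_comm (a := (0 : Fin (n + 1)))]
  simpa [← hB, ← hD, Function.comp_assoc] using (h.fromBlocks (diagonal fun _ => B 0 0)).reindex e

theorem exists_equivalent_diagonal_chain {μ : R → ℕ} (hμ : IsEuclideanMeasure μ) :
    ∀ {n : ℕ} (A : Matrix (Fin n) (Fin n) R),
      ∃ d : Fin n → R, (∀ i j, i ≤ j → d i ∣ d j) ∧ Equivalent A (diagonal d)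
  | 0, A => ⟨0, fun i => i.elim0, by rw [Subsingleton.elim A (diagonal 0)]⟩
  | n + 1, A => by
    obtain ⟨B, hAB, hrow, hcol, hdvd⟩ := exists_equivalent_pivot hμ 0 A
    obtain ⟨d, hd, hBd⟩ := exists_equivalent_diagonal_chain hμ (B.submatrix Fin.succ Fin.succ)
    refine ⟨Fin.cons (B 0 0) d, ?_, hAB.trans (equivalent_diagonal_cons hrow hcol hBd)⟩
    have hd₀ (j : Fin n) : B 0 0 ∣ d j := by
      simpa using hBd.dvd_apply (fun i j => hdvd _ _) j j
    intro i j hij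
    induction i using Fin.cases <;> induction j using Fin.cases
    · exact dvd_rfl
    · simpa using hd₀ _
    · exact absurd hij (by simp)
    · simpa using hd _ _ (Fin.succ_le_succ_iff.mp hij)

theorem dvd_of_equivalent_diagonal [Finite R] (hann : ∀ a : R, ∃ r : R, ∀ y, r * y = 0 ↔ a ∣ y)
    {d e : ι → R} (h : Equivalent (diagonal d) (diagonal e)) (k : ι)
    (hk : ∀ i, e i ∣ d i ∨ d k ∣ d i) : d k ∣ e k := by
  obtain ⟨r, hr⟩ := hann (d k)
  have hker (c : ι → R) : {x | (r • diagonal c) *ᵥ x = 0} = {x | ∀ i, r * c i * x i = 0} := by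
    ext x
    simp [smul_mulVec, funext_iff, mulVec_diagonal, mul_assoc]
  have hsub : {x | (r • diagonal e) *ᵥ x = 0} ⊆ {x | (r • diagonal d) *ᵥ x = 0} := by
    rw [hker, hker]
    intro x hx i
    rcases hk i with ⟨c, hc⟩ | hdi
    · rw [hc]
      linear_combination c * hx i
    · simp [(hr _).2 hdi]
  have heq := Set.eq_of_subset_of_ncard_le hsub (h.smul r).ncard_ker_eq.le
  have hsingle : Pi.single k 1 ∈ {x | (r • diagonal d) *ᵥ x = 0} := by
    rw [hker]
    intro i
    obtain rfl | hi := eq_or_ne i k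
    · simp [(hr _).2 dvd_rfl]
    · simp [hi]
  rw [← heq, hker] at hsingle
  exact (hr _).1 (by simpa using hsingle k)

theorem dvd_dvd_of_equivalent_diagonal [Finite R] [LinearOrder ι]
    (hann : ∀ a : R, ∃ r : R, ∀ y, r * y = 0 ↔ a ∣ y) {d e : ι → R}
    (hd : ∀ i j, i ≤ j → d i ∣ d j) (he : ∀ i j, i ≤ j → e i ∣ e j)
    (h : Equivalent (diagonal d) (diagonal e)) (k : ι) : d k ∣ e k ∧ e k ∣ d k := by
  induction k using WellFoundedLT.induction with
  | _ k ih =>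
    exact ⟨dvd_of_equivalent_diagonal hann h k fun i =>
        (lt_or_ge i k).imp (fun hi => (ih i hi).2) (hd k i),
      dvd_of_equivalent_diagonal hann h.symm k fun i =>
        (lt_or_ge i k).imp (fun hi => (ih i hi).1) (he k i)⟩

theorem exists_equivalent_diagonal_mem (P : Set R) (hP : ∀ a : R, ∃ p, p ∈ P ∧ ∃ u : Rˣ, a = p * u)
    (d : ι → R) :
    ∃ p : ι → R, (∀ i, p i ∈ P) ∧ (∀ i, Associated (p i) (d i)) ∧
      Equivalent (diagonal d) (diagonal p) := by
  choose p hpP u hu using fun i => hP (d i)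
  refine ⟨p, hpP, fun i => ⟨u i, (hu i).symm⟩, Equivalent.symm ?_⟩
  have hd : diagonal d = diagonal p * diagonal fun i => (u i : R) := by
    rw [diagonal_mul_diagonal]
    exact congrArg diagonal (funext hu)
  simpa [hd] using equivalent_mul_mul isUnit_one
    (isUnit_diagonal.mpr (Pi.isUnit_iff.mpr fun i => (u i).isUnit)) (diagonal p)

end Matrix

namespace ZMod

variable {m : ℕ}

theorem isEuclideanMeasure_val [NeZero m] : IsEuclideanMeasure (val : ZMod m → ℕ) := by
  intro a b ha _
  refine ⟨((b.val / a.val : ℕ) : ZMod m), ?_⟩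
  have hrem : b - ((b.val / a.val : ℕ) : ZMod m) * a = ((b.val % a.val : ℕ) : ZMod m) := by
    have h := congrArg (Nat.cast : ℕ → ZMod m) (Nat.mod_add_div b.val a.val)
    push_cast [natCast_zmod_val] at h
    linear_combination -h
  have hlt : b.val % a.val < a.val := Nat.mod_lt _ (val_pos.mpr ha)
  rwa [hrem, val_natCast, Nat.mod_eq_of_lt (hlt.trans (val_lt a))]

theorem natCast_dvd_natCast_iff_of_dvd {δ : ℕ} (hδ : δ ∣ m) (x : ℕ) :
    (δ : ZMod m) ∣ (x : ZMod m) ↔ δ ∣ x := by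
  constructor
  · rintro ⟨c, hc⟩
    have := congrArg (castHom hδ (ZMod δ)) hc
    rw [map_natCast, map_mul, map_natCast, natCast_self, zero_mul] at this
    exact (natCast_eq_zero_iff x δ).mp this
  · rintro ⟨c, rfl⟩
    exact ⟨c, Nat.cast_mul δ c⟩

theorem exists_mul_eq_zero_iff_dvd [NeZero m] (a : ZMod m) :
    ∃ r : ZMod m, ∀ y, r * y = 0 ↔ a ∣ y := by
  obtain ⟨δ, ⟨k, rfl⟩, u, hu, rfl⟩ := eq_unit_mul_divisor a
  have hk0 : 0 < k := Nat.pos_of_ne_zero fun h => NeZero.ne (δ * k) (by simp [h])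
  refine ⟨(k : ZMod (δ * k)), fun y => ?_⟩
  rw [hu.mul_left_dvd, ← natCast_zmod_val y, natCast_dvd_natCast_iff_of_dvd (dvd_mul_right δ k),
    ← Nat.cast_mul, natCast_eq_zero_iff, mul_comm k, Nat.mul_dvd_mul_iff_right hk0]

theorem associated_of_dvd_dvd {a b : ZMod m} (hab : a ∣ b) (hba : b ∣ a) : Associated a b := by
  obtain ⟨δ, hδ, u, hu, rfl⟩ := eq_unit_mul_divisor a
  obtain ⟨δ', hδ', v, hv, rfl⟩ := eq_unit_mul_divisor b
  rw [hu.mul_left_dvd, hv.dvd_mul_left, natCast_dvd_natCast_iff_of_dvd hδ] at hab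
  rw [hv.mul_left_dvd, hu.dvd_mul_left, natCast_dvd_natCast_iff_of_dvd hδ'] at hba
  obtain rfl := Nat.dvd_antisymm hab hba
  exact (associated_unit_mul_left _ _ hu).trans (associated_unit_mul_left _ _ hv).symm

end ZMod

theorem smith_normal_form_cyclic_ring_general (m n : ℕ) (hm : 0 < m)
    (P : Set (ZMod m))
    (hPrep : ∀ a : ZMod m, ∃! p : ZMod m, p ∈ P ∧ ∃ u : (ZMod m)ˣ, a = p * u)
    (A : Matrix (Fin n) (Fin n) (ZMod m)) :
    ∃! d : Fin n → ZMod m,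
      (∀ i, d i ∈ P) ∧
      (∀ i j : Fin n, i ≤ j → d i ∣ d j) ∧
      (∃ g h : (Matrix (Fin n) (Fin n) (ZMod m))ˣ,
        (↑g : Matrix (Fin n) (Fin n) (ZMod m)) * A * (↑h⁻¹ : Matrix (Fin n) (Fin n) (ZMod m)) = Matrix.diagonal d) := by
  have : NeZero m := ⟨hm.ne'⟩
  obtain ⟨d₀, hd₀, hAd₀⟩ := exists_equivalent_diagonal_chain ZMod.isEuclideanMeasure_val A
  obtain ⟨d, hdP, hdd₀, hd₀d⟩ := exists_equivalent_diagonal_mem P (fun a => (hPrep a).exists) d₀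
  have hAd := hAd₀.trans hd₀d
  have hd : ∀ i j, i ≤ j → d i ∣ d j := fun i j hij =>
    ((hdd₀ i).dvd_iff_dvd_left.2 (hd₀ i j hij)).trans (hdd₀ j).dvd'
  refine ⟨d, ⟨hdP, hd, ?_⟩, ?_⟩
  · obtain ⟨g, h, hgh⟩ := hAd
    exact ⟨g, h⁻¹, by rwa [inv_inv]⟩
  · rintro e ⟨heP, he, g, h, hgh⟩
    have hAe : Equivalent A (diagonal e) := ⟨g, h⁻¹, hgh⟩
    funext i
    obtain ⟨hed, hde⟩ := dvd_dvd_of_equivalent_diagonal ZMod.exists_mul_eq_zero_iff_dvd he hd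
      (hAe.symm.trans hAd) i
    obtain ⟨u, hu⟩ := ZMod.associated_of_dvd_dvd hde hed
    exact (hPrep (e i)).unique ⟨heP i, 1, (mul_one _).symm⟩ ⟨hdP i, u, hu.symm⟩

/-- Smith normal form over the cyclic ring `Z = ℤ/mℤ`: with respect to the action
`(g,h).A = g A h⁻¹` of `GL_n(Z) × GL_n(Z)` on `M_n(Z)`, each orbit contains a unique
diagonal matrix `diag(h_1, …, h_n)` with `h_i ∈ P` and `h_1 ∣ h_2 ∣ ⋯ ∣ h_n`, where
`P` is a fixed multiplicatively closed set of representatives of the `Zˣ`-cosets. -/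
theorem smith_normal_form_cyclic_ring (m n : ℕ) (hm : 0 < m)
    (P : Set (ZMod m)) (hP1 : (1 : ZMod m) ∈ P)
    (hPmul : ∀ p ∈ P, ∀ q ∈ P, p * q ∈ P)
    (hPrep : ∀ a : ZMod m, ∃! p : ZMod m, p ∈ P ∧ ∃ u : (ZMod m)ˣ, a = p * u)
    (A : Matrix (Fin n) (Fin n) (ZMod m)) :
    ∃! d : Fin n → ZMod m,
      (∀ i, d i ∈ P) ∧
      (∀ i j : Fin n, i ≤ j → d i ∣ d j) ∧
      (∃ g h : (Matrix (Fin n) (Fin n) (ZMod m))ˣ,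
        (↑g : Matrix (Fin n) (Fin n) (ZMod m)) * A * (↑h⁻¹ : Matrix (Fin n) (Fin n) (ZMod m)) = Matrix.diagonal d) :=
  smith_normal_form_cyclic_ring_general m n hm P hPrep A
end

section
/- Let Z = ℤ/(p^m) for a prime p and m ≥ 1. If D(z) = diag(p^{k_1},…, p^{k_{n-1}}, z p^{k_n}) with 0 ≤ k_1 ≤ … ≤ k_n < m and z ∈ Z^×, and if there exist g, h ∈ SL_n(Z) with g·D(1)·h = D(z), then D(z) = D(1), i.e., z·p^{k_n} = p^{k_n} in Z. -/
/-!
Put `P = diag(p^{k_i})` and `b = diag(1, …, 1, z) · h⁻¹`, so that `g · P = P · b`, `det g = 1` and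
`det b = z`. Lifted to integer matrices `A, B`, this relation only holds modulo `p^m`; but
subtracting from `A` a matrix divisible by `p^{m - k_n}` makes it exact, and then cancelling
`det P ≠ 0` over `ℤ` gives `z ≡ 1` modulo `p^{m - k_n}`, that is `z · p^{k_n} = p^{k_n}`.
-/

open Matrix

namespace Matrix

variable {ι R : Type*} [Fintype ι] [DecidableEq ι] [CommRing R]

theorem det_sub_det_mem_of_forall_sub_mem (I : Ideal R) {A B : Matrix ι ι R}
    (h : ∀ i j, A i j - B i j ∈ I) : A.det - B.det ∈ I := by
  rw [← Ideal.Quotient.eq, RingHom.map_det, RingHom.map_det]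
  congr 1
  ext i j
  exact Ideal.Quotient.eq.mpr (h i j)

theorem dvd_det_sub_det_of_mul_diagonal_dvd [IsDomain R] {N q : R} {d : ι → R}
    (hd : ∀ j, d j ≠ 0) (hqd : ∀ j, q * d j ∣ N) {A B : Matrix ι ι R}
    (hAB : ∀ i j, N ∣ d j * A i j - d i * B i j) : q ∣ A.det - B.det := by
  choose e he using hqd
  choose C hC using hAB
  set M : Matrix ι ι R := of fun i j => q * e j * C i j
  have hconj : (A - M) * diagonal d = diagonal d * B := by
    ext i j
    simp only [mul_diagonal, diagonal_mul, sub_apply, M, of_apply]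
    linear_combination hC i j + C i j * he j
  have hdet : (A - M).det = B.det := by
    have := congrArg det hconj
    rw [det_mul, det_mul, mul_comm] at this
    exact mul_left_cancel₀ (by simpa [det_diagonal, Finset.prod_ne_zero_iff] using hd) this
  rw [← hdet, ← Ideal.mem_span_singleton]
  refine det_sub_det_mem_of_forall_sub_mem _ fun i j => ?_
  simp only [sub_apply, sub_sub_cancel, M, of_apply, Ideal.mem_span_singleton, mul_assoc]
  exact dvd_mul_right _ _

end Matrix

theorem ZMod.natCast_dvd_det_sub_det_of_mul_diagonal_eq {ι : Type*} [Fintype ι] [DecidableEq ι]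
    {N q : ℕ} {d : ι → ℕ} (hd : ∀ j, d j ≠ 0) (hqd : ∀ j, q * d j ∣ N)
    {g b : Matrix ι ι (ZMod N)}
    (hgb : g * diagonal (fun i => (d i : ZMod N)) = diagonal (fun i => (d i : ZMod N)) * b) :
    (q : ZMod N) ∣ g.det - b.det := by
  have hlift (x : Matrix ι ι (ZMod N)) :
      (x.map ZMod.valMinAbs).map (Int.cast : ℤ → ZMod N) = x := by
    ext i j
    simp [ZMod.coe_valMinAbs]
  have hdvd : (q : ℤ) ∣ (g.map ZMod.valMinAbs).det - (b.map ZMod.valMinAbs).det := by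
    refine dvd_det_sub_det_of_mul_diagonal_dvd (N := (N : ℤ)) (d := fun i => (d i : ℤ))
      (fun j => by exact_mod_cast hd j) (fun j => by exact_mod_cast hqd j) fun i j => ?_
    rw [← ZMod.intCast_zmod_eq_zero_iff_dvd]
    have hij := congrFun (congrFun hgb i) j
    simp only [mul_diagonal, diagonal_mul] at hij
    push_cast
    simp [ZMod.coe_valMinAbs, mul_comm, hij]
  simpa only [map_sub, eq_intCast, Int.cast_det, Int.cast_natCast, hlift]
    using map_dvd (Int.castRingHom (ZMod N)) hdvd

theorem sl_smith_uniqueness_prime_power_general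
    (p : ℕ) (hp : p.Prime) (m : ℕ) (n : ℕ)
    (k : Fin (n + 1) → ℕ) (hmono : Monotone k) (hk : ∀ i, k i < m)
    (z : (ZMod (p ^ m))ˣ)
    (D : (ZMod (p ^ m))ˣ → Matrix (Fin (n + 1)) (Fin (n + 1)) (ZMod (p ^ m)))
    (hD : ∀ w, D w = Matrix.diagonal
      (fun i => (if i = Fin.last n then (w : ZMod (p ^ m)) else 1)
        * (p : ZMod (p ^ m)) ^ (k i)))
    (g h : Matrix.SpecialLinearGroup (Fin (n + 1)) (ZMod (p ^ m)))
    (hgh : (↑g : Matrix (Fin (n + 1)) (Fin (n + 1)) (ZMod (p ^ m))) * D 1 * (↑h : Matrix (Fin (n + 1)) (Fin (n + 1)) (ZMod (p ^ m))) = D z) :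
    (z : ZMod (p ^ m)) * (p : ZMod (p ^ m)) ^ (k (Fin.last n))
      = (p : ZMod (p ^ m)) ^ (k (Fin.last n)) := by
  set t := k (Fin.last n)
  set u : Fin (n + 1) → ZMod (p ^ m) := fun i => if i = Fin.last n then (z : ZMod (p ^ m)) else 1
  have hD1 : D 1 = diagonal fun i => ((p ^ k i : ℕ) : ZMod (p ^ m)) := by simp [hD]
  have hDz : D z = D 1 * diagonal u := by
    rw [hD, hD1, diagonal_mul_diagonal]
    congr 1
    funext i
    push_cast
    ring
  set b := diagonal u * ((h⁻¹ : Matrix.SpecialLinearGroup _ _) : Matrix _ _ (ZMod (p ^ m)))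
  have hgb : (g : Matrix _ _ (ZMod (p ^ m))) * D 1 = D 1 * b := by
    rw [← mul_assoc, ← hDz, ← hgh,
      mul_assoc _ (h : Matrix (Fin (n + 1)) (Fin (n + 1)) (ZMod (p ^ m))),
      ← Matrix.SpecialLinearGroup.coe_mul, mul_inv_cancel, Matrix.SpecialLinearGroup.coe_one,
      mul_one]
  have hdetb : b.det = z := by
    rw [det_mul, Matrix.SpecialLinearGroup.det_coe, mul_one, det_diagonal]
    simp [u]
  have hdvd : ((p ^ (m - t) : ℕ) : ZMod (p ^ m)) ∣ 1 - z := by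
    rw [← hdetb, ← Matrix.SpecialLinearGroup.det_coe g]
    rw [hD1] at hgb
    refine ZMod.natCast_dvd_det_sub_det_of_mul_diagonal_eq
      (fun j => pow_ne_zero _ hp.ne_zero) (fun j => ?_) hgb
    rw [← pow_add]
    exact pow_dvd_pow _ (by have := hmono (Fin.le_last j); have := hk (Fin.last n); omega)
  obtain ⟨c, hc⟩ := hdvd
  have hpm : ((p ^ (m - t) : ℕ) : ZMod (p ^ m)) * (p : ZMod (p ^ m)) ^ t = 0 := by
    rw [Nat.cast_pow, ← pow_add, Nat.sub_add_cancel (hk _).le, ← Nat.cast_pow, ZMod.natCast_self]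
  linear_combination (-(p : ZMod (p ^ m)) ^ t) * hc - c * hpm

/-- Over `Z = ℤ/p^mℤ` (`p` prime, `m ≥ 1`), if
`D(z) = diag(p^{k_1}, …, p^{k_{n-1}}, z·p^{k_n})` with `0 ≤ k_1 ≤ ⋯ ≤ k_n < m` and
`z ∈ Zˣ`, and `g·D(1)·h = D(z)` for some `g, h ∈ SL_n(Z)`, then `D(z) = D(1)`,
i.e. `z·p^{k_n} = p^{k_n}` in `Z`. -/
theorem sl_smith_uniqueness_prime_power
    (p : ℕ) (hp : p.Prime) (m : ℕ) (hm : 1 ≤ m) (n : ℕ)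
    (k : Fin (n + 1) → ℕ) (hmono : Monotone k) (hk : ∀ i, k i < m)
    (z : (ZMod (p ^ m))ˣ)
    (D : (ZMod (p ^ m))ˣ → Matrix (Fin (n + 1)) (Fin (n + 1)) (ZMod (p ^ m)))
    (hD : ∀ w, D w = Matrix.diagonal
      (fun i => (if i = Fin.last n then (w : ZMod (p ^ m)) else 1)
        * (p : ZMod (p ^ m)) ^ (k i)))
    (g h : Matrix.SpecialLinearGroup (Fin (n + 1)) (ZMod (p ^ m)))
    (hgh : (↑g : Matrix (Fin (n + 1)) (Fin (n + 1)) (ZMod (p ^ m))) * D 1 * (↑h : Matrix (Fin (n + 1)) (Fin (n + 1)) (ZMod (p ^ m))) = D z) :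
    (z : ZMod (p ^ m)) * (p : ZMod (p ^ m)) ^ (k (Fin.last n))
      = (p : ZMod (p ^ m)) ^ (k (Fin.last n)) :=
  sl_smith_uniqueness_prime_power_general p hp m n k hmono hk z D hD g h hgh
end

section
/- Let Z be a cyclic group. If N(h_1,…, z h_s) and N(h_1',…, z' h_{s'}') (with h_i, h_i' ∈ P nonzero, h_1|…|h_s, h_1'|…|h_{s'}', z, z' ∈ Z^×) lie in the same GL_n(ℤ)-orbit on Alt_n(Z) under g.A = gAg^⊤, then s = s' and h_i = h_i' for all i. -/
/-! Reduce modulo each divisor `M` of `m`. Congruence by a unimodular matrix preserves the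
number of solutions of `A x = 0` in `(ℤ/M)ⁿ`, and for `A = N(h)` that number is
`∏ⱼ gcd(M, dⱼ)`, where `dⱼ` is the gcd with `m` of the `j`-th entry of the Smith diagonal
`(h₁, h₁, …, h_s, h_s, 0, …, 0)`. The ratio of these numbers at `M = p ^ (k+1)` and at
`M = p ^ k` is `p` to the number of `j` with `p ^ (k+1) ∣ dⱼ`; as the `dⱼ` form a divisibility
chain, these counts determine it. Hence `gcd(hᵢ, m) = gcd(hᵢ', m)`, so `hᵢ` and `hᵢ'` are
associates, and `2s` is the first index where the chain reaches `m`. -/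

open Matrix

/-- The standard alternating block matrix `N(h_1, …, h_s)` (0-indexed `h`). -/
def Nmat {R : Type*} [Ring R] (n s : ℕ) (h : ℕ → R) : Matrix (Fin n) (Fin n) R :=
  Matrix.of fun i j =>
    if (j : ℕ) = (i : ℕ) + 1 ∧ (i : ℕ) % 2 = 0 ∧ (i : ℕ) < 2 * s then h ((i : ℕ) / 2)
    else if (i : ℕ) = (j : ℕ) + 1 ∧ (j : ℕ) % 2 = 0 ∧ (j : ℕ) < 2 * s then
      - h ((j : ℕ) / 2)
    else 0

open Finset

/-- The diagonal `(h₀, h₀, h₁, h₁, …, h_{s-1}, h_{s-1}, 0, …)`: the Smith normal form of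
`Nmat n s h`. -/
def smithDiag {R : Type*} [Zero R] (s : ℕ) (h : ℕ → R) (j : ℕ) : R :=
  if j < 2 * s then h (j / 2) else 0

section smithDiag

variable {R : Type*} {s : ℕ} {h : ℕ → R}

lemma smithDiag_two_mul [Zero R] {i : ℕ} (hi : i < s) : smithDiag s h (2 * i) = h i := by
  rw [smithDiag, if_pos (by omega), Nat.mul_div_cancel_left i two_pos]

lemma smithDiag_eq_zero_iff [Zero R] (hh : ∀ i < s, h i ≠ 0) (j : ℕ) :
    smithDiag s h j = 0 ↔ 2 * s ≤ j := by
  unfold smithDiag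
  split_ifs with hj
  · exact iff_of_false (hh _ (by omega)) (by omega)
  · exact iff_of_true rfl (by omega)

lemma dvd_of_forall_dvd_succ [Monoid R] (hh : ∀ i, i + 1 < s → h i ∣ h (i + 1)) {i j : ℕ}
    (hij : i ≤ j) (hj : j < s) : h i ∣ h j := by
  induction j, hij using Nat.le_induction with
  | base => rfl
  | succ j _ ih => exact (ih (by omega)).trans (hh j hj)

lemma smithDiag_dvd_smithDiag [MonoidWithZero R] (hh : ∀ i, i + 1 < s → h i ∣ h (i + 1))
    {i j : ℕ} (hij : i ≤ j) : smithDiag s h i ∣ smithDiag s h j := by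
  unfold smithDiag
  split_ifs with hi hj hj
  · exact dvd_of_forall_dvd_succ hh (Nat.div_le_div_right hij) (by omega)
  · exact dvd_zero _
  · omega
  · exact dvd_zero _

lemma smithDiag_map [Ring R] {S : Type*} [Ring S] (f : R →+* S) (j : ℕ) :
    smithDiag s (fun i => f (h i)) j = f (smithDiag s h j) := by
  unfold smithDiag
  split_ifs <;> simp

end smithDiag

section Nmat

variable {R : Type*} [Ring R] {n s : ℕ} (h : ℕ → R)

lemma Nmat_apply (i j : Fin n) :
    Nmat n s h i j = if (i : ℕ) / 2 = (j : ℕ) / 2 ∧ (i : ℕ) ≠ j then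
      (if (i : ℕ) % 2 = 0 then smithDiag s h j else -smithDiag s h j) else 0 := by
  unfold Nmat smithDiag
  simp only [of_apply]
  split_ifs <;> first | rfl | omega | simp | (congr 1; omega)

lemma Nmat_mulVec_eq_zero_iff (hs : 2 * s ≤ n) (x : Fin n → R) :
    Nmat n s h *ᵥ x = 0 ↔ ∀ j : Fin n, smithDiag s h j * x j = 0 := by
  constructor
  · intro hx j
    by_cases hj : (j : ℕ) < 2 * s
    swap
    · simp [smithDiag, hj]
    -- row `i` of `Nmat` has a single nonzero entry, in column `j`
    let i : Fin n := ⟨if (j : ℕ) % 2 = 0 then j + 1 else j - 1, by split_ifs <;> omega⟩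
    have hi : (i : ℕ) / 2 = (j : ℕ) / 2 ∧ (i : ℕ) ≠ j := by
      simp only [i]; split_ifs <;> omega
    have hrow : (Nmat n s h *ᵥ x) i = Nmat n s h i j * x j := by
      simp only [mulVec, dotProduct]
      refine Finset.sum_eq_single j (fun j' _ hj' => ?_) (absurd (Finset.mem_univ j))
      rw [Nmat_apply, if_neg, zero_mul]
      rintro ⟨h1, h2⟩
      exact hj' (Fin.ext (by simp only [i] at h1 h2; split_ifs at h1 h2 <;> omega))
    have hzero := congrFun hx i
    rw [Pi.zero_apply, hrow, Nmat_apply, if_pos hi] at hzero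
    split_ifs at hzero
    · exact hzero
    · simpa using hzero
  · intro hx
    ext i
    simp only [mulVec, dotProduct, Pi.zero_apply]
    refine Finset.sum_eq_zero fun j _ => ?_
    rw [Nmat_apply]
    split_ifs <;> simp [hx j]

lemma Nmat_map {S : Type*} [Ring S] (f : R →+* S) :
    (Nmat n s h).map f = Nmat n s (fun i => f (h i)) := by
  ext i j
  simp only [Nmat, map_apply, of_apply]
  split_ifs <;> simp

end Nmat

lemma Matrix.card_ker_mul_mul_of_isUnit {ι R : Type*} [Fintype ι] [DecidableEq ι] [CommRing R]
    {P Q : Matrix ι ι R} (hP : IsUnit P) (hQ : IsUnit Q) (A : Matrix ι ι R) :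
    Nat.card {x // (P * A * Q) *ᵥ x = 0} = Nat.card {x // A *ᵥ x = 0} := by
  let e := Equiv.ofBijective _
    ⟨mulVec_injective_of_isUnit hQ, mulVec_surjective_iff_isUnit.2 hQ⟩
  refine Nat.card_congr (e.subtypeEquiv fun x => ?_)
  rw [← mulVec_mulVec, ← mulVec_mulVec, (mulVec_injective_of_isUnit hP).eq_iff' (mulVec_zero P)]
  rfl

namespace ZMod

lemma card_natCast_mul_eq_zero (M x : ℕ) [NeZero M] :
    Nat.card {y : ZMod M // (x : ZMod M) * y = 0} = M.gcd x := by
  have hker := IsAddCyclic.card_nsmulAddMonoidHom_ker (ZMod M) x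
  rw [Nat.card_zmod] at hker
  rw [← hker]
  exact Nat.card_congr (Equiv.subtypeEquivRight fun y => by simp [nsmul_eq_mul] :
    {y : ZMod M // (x : ZMod M) * y = 0} ≃
      {y // y ∈ (nsmulAddMonoidHom x : ZMod M →+ ZMod M).ker})

lemma gcd_val_dvd_gcd_val {m : ℕ} {a b : ZMod m} (hab : a ∣ b) :
    a.val.gcd m ∣ b.val.gcd m := by
  obtain ⟨c, rfl⟩ := hab
  refine Nat.dvd_gcd ?_ (Nat.gcd_dvd_right _ _)
  rw [val_mul, Nat.dvd_mod_iff (Nat.gcd_dvd_right _ _)]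
  exact (Nat.gcd_dvd_left _ _).mul_right _

lemma gcd_val_eq_of_associated {m : ℕ} {a b : ZMod m} (hab : Associated a b) :
    a.val.gcd m = b.val.gcd m :=
  Nat.dvd_antisymm (gcd_val_dvd_gcd_val hab.dvd) (gcd_val_dvd_gcd_val hab.symm.dvd)

lemma gcd_val_eq_self_iff {m : ℕ} (a : ZMod m) : a.val.gcd m = m ↔ a = 0 := by
  rw [Nat.gcd_eq_right_iff_dvd, ← val_eq_zero]
  rcases m.eq_zero_or_pos with rfl | hm
  · exact zero_dvd_iff
  · have : NeZero m := ⟨hm.ne'⟩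
    exact ⟨fun h => Nat.eq_zero_of_dvd_of_lt h (val_lt a), fun h => h ▸ dvd_zero m⟩

lemma associated_natCast_gcd_val {m : ℕ} (a : ZMod m) : Associated (a.val.gcd m : ZMod m) a := by
  rcases m.eq_zero_or_pos with rfl | hm
  · rw [Nat.gcd_zero_right]
    exact (Int.associated_natAbs a).symm
  have : NeZero m := ⟨hm.ne'⟩
  have hd : 0 < a.val.gcd m := Nat.gcd_pos_of_pos_right _ hm
  -- `a = d * (a.val / d)` with `d = gcd a.val m`, and `a.val / d` is a unit modulo `m / d`
  obtain ⟨u, hu⟩ := unitsMap_surjective (Nat.div_dvd_of_dvd (Nat.gcd_dvd_right a.val m))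
    (unitOfCoprime _ (Nat.coprime_div_gcd_div_gcd hd))
  have hcong : (u : ZMod m).val ≡ a.val / a.val.gcd m [MOD m / a.val.gcd m] := by
    rw [← natCast_eq_natCast_iff, natCast_val,
      ← coe_unitOfCoprime _ (Nat.coprime_div_gcd_div_gcd hd), ← hu]
    simp [unitsMap_def]
  have := hcong.mul_left' (a.val.gcd m)
  rw [Nat.mul_div_cancel' (Nat.gcd_dvd_left _ _), Nat.mul_div_cancel' (Nat.gcd_dvd_right _ _),
    ← natCast_eq_natCast_iff] at this
  refine ⟨u, ?_⟩
  simpa using this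

lemma card_castHom_mul_eq_zero {m M : ℕ} [NeZero M] (hM : M ∣ m) (a : ZMod m) :
    Nat.card {y : ZMod M // castHom hM (ZMod M) a * y = 0} = M.gcd (a.val.gcd m) := by
  obtain ⟨u, hu⟩ := associated_natCast_gcd_val a
  have hφ : castHom hM (ZMod M) a = (a.val.gcd m : ZMod M) * castHom hM (ZMod M) u := by
    conv_lhs => rw [← hu]
    rw [map_mul, map_natCast]
  rw [hφ, ← card_natCast_mul_eq_zero M]
  refine Nat.card_congr (Equiv.subtypeEquivRight fun y => ?_)
  rw [mul_right_comm, (u.isUnit.map _).mul_left_eq_zero]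

lemma eq_of_gcd_val_eq {m : ℕ} {P : Set (ZMod m)}
    (hP : ∀ a : ZMod m, ∃! p : ZMod m, p ∈ P ∧ ∃ u : (ZMod m)ˣ, a = p * u) {a b : ZMod m}
    (ha : a ∈ P) (hb : b ∈ P) (hab : a.val.gcd m = b.val.gcd m) : a = b := by
  obtain ⟨u, hu⟩ := (associated_natCast_gcd_val a).symm.trans
    (hab ▸ associated_natCast_gcd_val b)
  exact (hP b).unique ⟨ha, u, hu.symm⟩ ⟨hb, 1, (mul_one b).symm⟩

end ZMod

lemma Monotone.eq_of_card_filter_eq {ι : Type*} [Fintype ι] [LinearOrder ι] {P Q : ι → Prop}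
    [DecidablePred P] [DecidablePred Q] (hP : Monotone P) (hQ : Monotone Q)
    (hcard : #{i | P i} = #{i | Q i}) : P = Q := by
  suffices key : ∀ {P Q : ι → Prop} [DecidablePred P] [DecidablePred Q], Monotone P →
      Monotone Q → #{i | P i} = #{i | Q i} → ∀ i, P i → Q i by
    ext i
    exact ⟨key hP hQ hcard i, key hQ hP hcard.symm i⟩
  intro P Q _ _ hP hQ hcard i hPi
  by_contra hQi
  have hge : #{j | i ≤ j} ≤ #{j | P j} :=
    card_le_card fun j hj => by simp only [mem_filter_univ] at hj ⊢; exact hP hj hPi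
  have hgt : #{j | Q j} ≤ #{j | i < j} :=
    card_le_card fun j hj => by
      simp only [mem_filter_univ] at hj ⊢
      exact lt_of_not_ge fun hji => hQi (hQ hji hj)
  have hlt : #{j | i < j} < #{j | i ≤ j} :=
    card_lt_card <| (ssubset_iff_of_subset fun j hj => by
      simp only [mem_filter_univ] at hj ⊢; exact hj.le).2 ⟨i, by simp, by simp⟩
  omega

lemma Nat.Prime.pow_succ_gcd {p : ℕ} (hp : p.Prime) (k x : ℕ) :
    (p ^ (k + 1)).gcd x = (if p ^ (k + 1) ∣ x then p else 1) * (p ^ k).gcd x := by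
  split_ifs with hx
  · rw [Nat.gcd_eq_left hx, Nat.gcd_eq_left ((pow_dvd_pow p k.le_succ).trans hx), pow_succ']
  · rw [one_mul]
    refine Nat.dvd_antisymm ?_ (Nat.gcd_dvd_gcd_of_dvd_left x (pow_dvd_pow p k.le_succ))
    obtain ⟨j, hj, hgcd⟩ := (Nat.dvd_prime_pow hp).1 (Nat.gcd_dvd_left (p ^ (k + 1)) x)
    have hjk : j ≤ k := by
      by_contra hkj
      rw [show j = k + 1 by omega] at hgcd
      exact hx (hgcd ▸ Nat.gcd_dvd_right _ _)
    rw [hgcd]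
    exact Nat.dvd_gcd (pow_dvd_pow p hjk) (hgcd ▸ Nat.gcd_dvd_right _ _)

lemma Nat.Prime.prod_pow_succ_gcd {ι : Type*} [Fintype ι] {p : ℕ} (hp : p.Prime) (k : ℕ)
    (x : ι → ℕ) :
    ∏ i, (p ^ (k + 1)).gcd (x i) = p ^ #{i | p ^ (k + 1) ∣ x i} * ∏ i, (p ^ k).gcd (x i) := by
  simp only [hp.pow_succ_gcd k, prod_mul_distrib, prod_ite, prod_const, one_pow, mul_one]

theorem eq_of_forall_prod_gcd_eq {ι : Type*} [Fintype ι] [LinearOrder ι] {m : ℕ}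
    {x y : ι → ℕ}
    (hx : ∀ i j, i ≤ j → x i ∣ x j) (hy : ∀ i j, i ≤ j → y i ∣ y j)
    (hxm : ∀ i, x i ∣ m) (hym : ∀ i, y i ∣ m)
    (H : ∀ M, M ≠ 0 → M ∣ m → ∏ i, M.gcd (x i) = ∏ i, M.gcd (y i)) : x = y := by
  classical
  have hdvd_iff : ∀ p k i, p.Prime → p ^ k ∣ m → (p ^ k ∣ x i ↔ p ^ k ∣ y i) := by
    intro p k i hp hpk
    cases k with
    | zero => simp only [pow_zero, one_dvd]
    | succ k =>
      have hcard : #{i | p ^ (k + 1) ∣ x i} = #{i | p ^ (k + 1) ∣ y i} := by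
        have hprod := H _ (pow_ne_zero _ hp.ne_zero) hpk
        rw [hp.prod_pow_succ_gcd, hp.prod_pow_succ_gcd,
          H _ (pow_ne_zero _ hp.ne_zero) ((pow_dvd_pow p k.le_succ).trans hpk)] at hprod
        refine Nat.pow_right_injective hp.two_le (Nat.eq_of_mul_eq_mul_right ?_ hprod)
        exact prod_pos fun i _ => Nat.gcd_pos_of_pos_left _ (pow_pos hp.pos k)
      have hmono : ∀ z : ι → ℕ, (∀ i j, i ≤ j → z i ∣ z j) →
          Monotone fun i => p ^ (k + 1) ∣ z i :=
        fun z hz i j hij h => h.trans (hz i j hij)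
      exact iff_of_eq (congrFun (Monotone.eq_of_card_filter_eq (hmono x hx) (hmono y hy) hcard) i)
  funext i
  apply Nat.dvd_antisymm <;> rw [Nat.dvd_iff_prime_pow_dvd_dvd] <;> intro p k hp hpk
  · exact (hdvd_iff p k i hp (hpk.trans (hxm i))).1 hpk
  · exact (hdvd_iff p k i hp (hpk.trans (hym i))).2 hpk

lemma Matrix.isUnit_map_intCast {ι R : Type*} [Fintype ι] [DecidableEq ι] [CommRing R]
    {g : Matrix ι ι ℤ} (hg : g.det = 1 ∨ g.det = -1) :
    IsUnit (g.map (Int.cast : ℤ → R)) := by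
  rw [isUnit_iff_isUnit_det, ← Int.cast_det]
  rcases hg with hg | hg <;> simp [hg]

lemma card_ker_Nmat_castHom {m M n s : ℕ} [NeZero M] (hM : M ∣ m) (hs : 2 * s ≤ n)
    (h : ℕ → ZMod m) :
    Nat.card {x : Fin n → ZMod M // Nmat n s (fun i => ZMod.castHom hM (ZMod M) (h i)) *ᵥ x = 0}
      = ∏ j : Fin n, M.gcd ((smithDiag s h j).val.gcd m) := by
  simp_rw [Nmat_mulVec_eq_zero_iff _ hs, smithDiag_map, ← ZMod.card_castHom_mul_eq_zero hM,
    ← Nat.card_pi]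
  exact Nat.card_congr <| Equiv.subtypePiEquivPi
    (p := fun (j : Fin n) y => ZMod.castHom hM (ZMod M) (smithDiag s h j) * y = 0)

lemma prod_gcd_smithDiag_eq_of_congr {m n s s' : ℕ} (hs : 2 * s ≤ n) (hs' : 2 * s' ≤ n)
    {h h' : ℕ → ZMod m} {G : Matrix (Fin n) (Fin n) (ZMod m)} (hG : IsUnit G)
    (horb : G * Nmat n s h * Gᵀ = Nmat n s' h') {M : ℕ} (hM0 : M ≠ 0) (hM : M ∣ m) :
    ∏ j : Fin n, M.gcd ((smithDiag s h j).val.gcd m)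
      = ∏ j : Fin n, M.gcd ((smithDiag s' h' j).val.gcd m) := by
  have : NeZero M := ⟨hM0⟩
  let φ := ZMod.castHom hM (ZMod M)
  have hGφ : IsUnit (G.map φ) := hG.map φ.mapMatrix
  have horbφ := congrArg (Matrix.map · φ) horb
  simp only [Matrix.map_mul, transpose_map, Nmat_map] at horbφ
  rw [← card_ker_Nmat_castHom hM hs, ← card_ker_Nmat_castHom hM hs', ← horbφ,
    card_ker_mul_mul_of_isUnit hGφ ((isUnit_transpose _).2 hGφ)]


theorem gcd_val_smithDiag_eq_of_congr {m n s s' : ℕ} (hs : 2 * s ≤ n) (hs' : 2 * s' ≤ n)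
    {h h' : ℕ → ZMod m} (hh : ∀ i, i + 1 < s → h i ∣ h (i + 1))
    (hh' : ∀ i, i + 1 < s' → h' i ∣ h' (i + 1)) {G : Matrix (Fin n) (Fin n) (ZMod m)}
    (hG : IsUnit G) (horb : G * Nmat n s h * Gᵀ = Nmat n s' h') (j : Fin n) :
    (smithDiag s h j).val.gcd m = (smithDiag s' h' j).val.gcd m :=
  congrFun (eq_of_forall_prod_gcd_eq (ι := Fin n)
    (fun _ _ hij => ZMod.gcd_val_dvd_gcd_val (smithDiag_dvd_smithDiag hh hij))
    (fun _ _ hij => ZMod.gcd_val_dvd_gcd_val (smithDiag_dvd_smithDiag hh' hij))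
    (fun _ => Nat.gcd_dvd_right _ _) (fun _ => Nat.gcd_dvd_right _ _)
    (fun _ hM0 hM => prod_gcd_smithDiag_eq_of_congr hs hs' hG horb hM0 hM)) j

lemma eq_of_gcd_val_smithDiag_eq {m n s s' : ℕ} (hs : 2 * s ≤ n) (hs' : 2 * s' ≤ n)
    {h h' : ℕ → ZMod m} (hh : ∀ i < s, h i ≠ 0) (hh' : ∀ i < s', h' i ≠ 0)
    (hdiag : ∀ j : Fin n, (smithDiag s h j).val.gcd m = (smithDiag s' h' j).val.gcd m) :
    s = s' := by
  have hzero : ∀ j : Fin n, 2 * s ≤ j ↔ 2 * s' ≤ j := fun j => by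
    rw [← smithDiag_eq_zero_iff hh, ← smithDiag_eq_zero_iff hh', ← ZMod.gcd_val_eq_self_iff,
      ← ZMod.gcd_val_eq_self_iff, hdiag]
  by_contra hne
  rcases Nat.lt_or_gt_of_ne hne with hlt | hlt
  · exact absurd ((hzero ⟨2 * s, by omega⟩).1 le_rfl) (by simp; omega)
  · exact absurd ((hzero ⟨2 * s', by omega⟩).2 le_rfl) (by simp; omega)

theorem gl_orbit_alt_normal_form_invariants_general (m n : ℕ)
    (P : Set (ZMod m))
    (hPrep : ∀ a : ZMod m, ∃! p : ZMod m, p ∈ P ∧ ∃ u : (ZMod m)ˣ, a = p * u)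
    (s s' : ℕ) (h h' : ℕ → ZMod m) (z z' : (ZMod m)ˣ)
    (hsn : 2 * s ≤ n) (hsn' : 2 * s' ≤ n)
    (hh : ∀ i < s, h i ∈ P ∧ h i ≠ 0)
    (hh' : ∀ i < s', h' i ∈ P ∧ h' i ≠ 0)
    (hchain : ∀ i, i + 1 < s → h i ∣ h (i + 1))
    (hchain' : ∀ i, i + 1 < s' → h' i ∣ h' (i + 1))
    (g : Matrix (Fin n) (Fin n) ℤ) (hg : g.det = 1 ∨ g.det = -1)
    (horb : (g.map (Int.cast : ℤ → ZMod m)) *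
        Nmat n s (fun i => (if i + 1 = s then (z : ZMod m) else 1) * h i) *
        (g.map (Int.cast : ℤ → ZMod m))ᵀ
      = Nmat n s' (fun i => (if i + 1 = s' then (z' : ZMod m) else 1) * h' i)) :
    s = s' ∧ ∀ i < s, h i = h' i := by
  set A := fun i => (if i + 1 = s then (z : ZMod m) else 1) * h i
  set A' := fun i => (if i + 1 = s' then (z' : ZMod m) else 1) * h' i
  have hA : ∀ i, Associated (A i) (h i) := fun i =>
    associated_unit_mul_left _ _ (by split_ifs <;> simp)
  have hA' : ∀ i, Associated (A' i) (h' i) := fun i =>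
    associated_unit_mul_left _ _ (by split_ifs <;> simp)
  have hdiag := gcd_val_smithDiag_eq_of_congr hsn hsn'
    (fun i hi => (hA i).dvd.trans <| (hchain i hi).trans (hA (i + 1)).symm.dvd)
    (fun i hi => (hA' i).dvd.trans <| (hchain' i hi).trans (hA' (i + 1)).symm.dvd)
    (Matrix.isUnit_map_intCast hg) horb
  obtain rfl : s = s' := eq_of_gcd_val_smithDiag_eq hsn hsn'
    (fun i hi => (hA i).ne_zero_iff.2 (hh i hi).2)
    (fun i hi => (hA' i).ne_zero_iff.2 (hh' i hi).2) hdiag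
  refine ⟨rfl, fun i hi => ZMod.eq_of_gcd_val_eq hPrep (hh i hi).1 (hh' i hi).1 ?_⟩
  have hdiag_i := hdiag ⟨2 * i, by omega⟩
  rwa [Fin.val_mk, smithDiag_two_mul hi, smithDiag_two_mul hi,
    ZMod.gcd_val_eq_of_associated (hA i), ZMod.gcd_val_eq_of_associated (hA' i)] at hdiag_i

/-- Over a cyclic group `Z = ℤ/mℤ`: if `N(h_1, …, z·h_s)` and `N(h_1', …, z'·h_{s'}')`
(with `h_i, h_i' ∈ P` nonzero, `h_1∣⋯∣h_s`, `h_1'∣⋯∣h_{s'}'`, `z, z' ∈ Zˣ`) lie in the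
same `GL_n(ℤ)`-orbit under `g.A = g A gᵀ`, then `s = s'` and `h_i = h_i'` for all `i`. -/
theorem gl_orbit_alt_normal_form_invariants (m n : ℕ)
    (P : Set (ZMod m)) (hP1 : (1 : ZMod m) ∈ P)
    (hPmul : ∀ p ∈ P, ∀ q ∈ P, p * q ∈ P)
    (hPrep : ∀ a : ZMod m, ∃! p : ZMod m, p ∈ P ∧ ∃ u : (ZMod m)ˣ, a = p * u)
    (s s' : ℕ) (h h' : ℕ → ZMod m) (z z' : (ZMod m)ˣ)
    (hsn : 2 * s ≤ n) (hsn' : 2 * s' ≤ n)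
    (hh : ∀ i < s, h i ∈ P ∧ h i ≠ 0)
    (hh' : ∀ i < s', h' i ∈ P ∧ h' i ≠ 0)
    (hchain : ∀ i, i + 1 < s → h i ∣ h (i + 1))
    (hchain' : ∀ i, i + 1 < s' → h' i ∣ h' (i + 1))
    (g : Matrix (Fin n) (Fin n) ℤ) (hg : g.det = 1 ∨ g.det = -1)
    (horb : (g.map (Int.cast : ℤ → ZMod m)) *
        Nmat n s (fun i => (if i + 1 = s then (z : ZMod m) else 1) * h i) *
        (g.map (Int.cast : ℤ → ZMod m))ᵀ
      = Nmat n s' (fun i => (if i + 1 = s' then (z' : ZMod m) else 1) * h' i)) :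
    s = s' ∧ ∀ i < s, h i = h' i :=
  gl_orbit_alt_normal_form_invariants_general m n P hPrep s s' h h' z z' hsn hsn' hh hh' hchain
    hchain' g hg horb
end

section
/- For any field 𝕂 and any q ∈ 𝕂^×, the short exact sequence 1 → Hom(ℤ², 𝕂^×) → Aut(A_q) → Aut(ℤ², λ) → 1 splits, where λ(γ,γ') = q^{γ₁γ₂' − γ₂γ₁'}. Concretely, for q² ≠ 1, the assignment sending the generators g₁ = [[0,1],[−1,0]] and g₂ = [[1,1],[−1,0]] of SL₂(ℤ) to the automorphisms ĝ₁(δ_γ) = q^{γ₁ − γ₁γ₂} δ_{g₁γ} and ĝ₂(δ_γ) = q^{−C(γ₁,2) − γ₁γ₂} δ_{g₂γ} (with suitable scalar normalizations r₁ = q, r₂ = s₁ = s₂ = 1) extends to a group homomorphism SL₂(ℤ) → Aut(A_q) splitting the quotient map. -/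
open Matrix

/-!
Every `g ∈ H` has determinant `±1`, and preserving `λ` forces `q ^ det g = q`. The parity of
`R γ = γ₀γ₁ - γ₀ - γ₁` is invariant under `GL₂(ℤ)`, so `E_g γ = (R (gγ) - det g · R γ) / 2` is an
integer, and it satisfies `E_{gh} γ = det g · E_h γ + E_g (hγ)` and
`E_g (γ + γ') - E_g γ - E_g γ' = (gγ)₀ (gγ')₁ - det g · γ₀ γ'₁`. Since `q ^ det g = q`, the factors
`det g` disappear after exponentiating, so `δ_γ ↦ q ^ E_g γ • δ_{gγ}` is an algebra automorphism
and these automorphisms compose like the `g`.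
-/

section TwistedMap

variable {K A Γ G : Type*} [CommSemiring K] [Semiring A] [Algebra K A]
  [AddCommMonoid Γ] [Group G] [DistribMulAction G Γ]
  (b : Module.Basis Γ K A) (χ : G → Γ → Kˣ)

noncomputable def twistedMap (g : G) : A →ₗ[K] A :=
  b.constr K fun γ => (χ g γ : K) • b (g • γ)

@[simp]
theorem twistedMap_basis (g : G) (γ : Γ) :
    twistedMap b χ g (b γ) = (χ g γ : K) • b (g • γ) :=
  b.constr_basis K _ γ

variable {χ} {f : Γ → Γ → Kˣ}

theorem twistedMap_mul (hχ_cocycle : ∀ g h γ, χ (g * h) γ = χ h γ * χ g (h • γ)) (g h : G) :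
    twistedMap b χ (g * h) = twistedMap b χ g ∘ₗ twistedMap b χ h :=
  b.ext fun γ => by
    rw [LinearMap.comp_apply, twistedMap_basis, twistedMap_basis, LinearMap.map_smul,
      twistedMap_basis, smul_smul, hχ_cocycle, mul_smul, Units.val_mul, mul_comm]

theorem twistedMap_one (hχ_cocycle : ∀ g h γ, χ (g * h) γ = χ h γ * χ g (h • γ)) :
    twistedMap b χ 1 = LinearMap.id :=
  b.ext fun γ => by
    have h1 : χ 1 γ = 1 := by simpa using hχ_cocycle 1 1 γ
    simp [h1]

theorem twistedMap_map_mul (hb : ∀ γ γ', b γ * b γ' = (f γ γ' : K) • b (γ + γ'))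
    (hχ_mul : ∀ g γ γ', f γ γ' * χ g (γ + γ') = χ g γ * χ g γ' * f (g • γ) (g • γ'))
    (g : G) (x y : A) :
    twistedMap b χ g (x * y) = twistedMap b χ g x * twistedMap b χ g y := by
  have : (LinearMap.mul K A).compr₂ (twistedMap b χ g)
      = (LinearMap.mul K A).compl₁₂ (twistedMap b χ g) (twistedMap b χ g) :=
    LinearMap.ext_basis b b fun γ γ' => by
      simp only [LinearMap.compr₂_apply, LinearMap.compl₁₂_apply, LinearMap.mul_apply']
      rw [hb, LinearMap.map_smul, twistedMap_basis, twistedMap_basis, twistedMap_basis,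
        smul_mul_smul_comm, hb, smul_smul, smul_smul, smul_add, ← Units.val_mul,
        ← Units.val_mul, ← Units.val_mul, hχ_mul]
  exact LinearMap.congr_fun₂ this x y

variable (hb : ∀ γ γ', b γ * b γ' = (f γ γ' : K) • b (γ + γ'))
  (hχ_mul : ∀ g γ γ', f γ γ' * χ g (γ + γ') = χ g γ * χ g γ' * f (g • γ) (g • γ'))
  (hχ_cocycle : ∀ g h γ, χ (g * h) γ = χ h γ * χ g (h • γ))

noncomputable def twistedAut : G →* (A ≃ₐ[K] A) where
  toFun g :=
    let e := LinearEquiv.ofLinearMap (twistedMap b χ g) (twistedMap b χ g⁻¹)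
      (by rw [← twistedMap_mul b hχ_cocycle, mul_inv_cancel, twistedMap_one b hχ_cocycle])
      (by rw [← twistedMap_mul b hχ_cocycle, inv_mul_cancel, twistedMap_one b hχ_cocycle])
    have map_mul := twistedMap_map_mul b hb hχ_mul g
    AlgEquiv.ofLinearEquiv e (map_one (MulEquiv.mk e.toEquiv map_mul)) map_mul
  map_one' := AlgEquiv.ext fun x => LinearMap.congr_fun (twistedMap_one b hχ_cocycle) x
  map_mul' g h := AlgEquiv.ext fun x => LinearMap.congr_fun (twistedMap_mul b hχ_cocycle g h) x

theorem twistedAut_basis (g : G) (γ : Γ) :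
    twistedAut b hb hχ_mul hχ_cocycle g (b γ) = (χ g γ : K) • b (g • γ) :=
  twistedMap_basis b χ g γ

end TwistedMap

theorem mulVec_fin_two_apply {R : Type*} [NonUnitalNonAssocSemiring R]
    (M : Matrix (Fin 2) (Fin 2) R) (γ : Fin 2 → R) (i : Fin 2) :
    (M *ᵥ γ) i = M i 0 * γ 0 + M i 1 * γ 1 := by
  simp [mulVec, dotProduct, Fin.sum_univ_two]

def torusQuadratic (γ : Fin 2 → ℤ) : ℤ := γ 0 * γ 1 - γ 0 - γ 1

theorem two_dvd_torusQuadratic_mulVec_sub (M : Matrix (Fin 2) (Fin 2) ℤ) (hM : Odd M.det)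
    (γ : Fin 2 → ℤ) : 2 ∣ torusQuadratic (M *ᵥ γ) - M.det * torusQuadratic γ := by
  have key : ∀ a b c d x y : ZMod 2, a * d - b * c = 1 →
      (a * x + b * y) * (c * x + d * y) - (a * x + b * y) - (c * x + d * y)
        - (a * d - b * c) * (x * y - x - y) = 0 := by decide
  rw [det_fin_two] at hM ⊢
  have h1 := ZMod.intCast_eq_one_iff_odd.mpr hM
  push_cast at h1
  have h2 := key _ _ _ _ (γ 0) (γ 1) h1
  rw [← Nat.cast_ofNat, ← ZMod.intCast_zmod_eq_zero_iff_dvd]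
  simp only [torusQuadratic, mulVec_fin_two_apply]
  push_cast
  linear_combination h2

def twistExponent (M : Matrix (Fin 2) (Fin 2) ℤ) (γ : Fin 2 → ℤ) : ℤ :=
  (torusQuadratic (M *ᵥ γ) - M.det * torusQuadratic γ) / 2

theorem two_mul_twistExponent {M : Matrix (Fin 2) (Fin 2) ℤ} (hM : Odd M.det) (γ : Fin 2 → ℤ) :
    2 * twistExponent M γ = torusQuadratic (M *ᵥ γ) - M.det * torusQuadratic γ :=
  Int.mul_ediv_cancel' (two_dvd_torusQuadratic_mulVec_sub M hM γ)

theorem twistExponent_mul {M N : Matrix (Fin 2) (Fin 2) ℤ} (hM : Odd M.det) (hN : Odd N.det)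
    (γ : Fin 2 → ℤ) :
    twistExponent (M * N) γ = M.det * twistExponent N γ + twistExponent M (N *ᵥ γ) := by
  have hMN : Odd (M * N).det := by rw [det_mul]; exact hM.mul hN
  apply mul_left_cancel₀ (two_ne_zero (α := ℤ))
  have h1 := two_mul_twistExponent hMN γ
  have h2 := two_mul_twistExponent hN γ
  have h3 := two_mul_twistExponent hM (N *ᵥ γ)
  rw [det_mul, ← mulVec_mulVec] at h1
  linear_combination h1 - M.det * h2 - h3

theorem twistExponent_add {M : Matrix (Fin 2) (Fin 2) ℤ} (hM : Odd M.det) (γ γ' : Fin 2 → ℤ) :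
    twistExponent M (γ + γ') + M.det * (γ 0 * γ' 1) =
      twistExponent M γ + twistExponent M γ' + (M *ᵥ γ) 0 * (M *ᵥ γ') 1 := by
  apply mul_left_cancel₀ (two_ne_zero (α := ℤ))
  have h1 := two_mul_twistExponent hM (γ + γ')
  have h2 := two_mul_twistExponent hM γ
  have h3 := two_mul_twistExponent hM γ'
  simp only [torusQuadratic, mulVec_fin_two_apply, det_fin_two, Pi.add_apply] at h1 h2 h3 ⊢
  linear_combination h1 - h2 - h3

section ZPow

variable {G : Type*} [CommGroup G] {q : G} {M : Matrix (Fin 2) (Fin 2) ℤ}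

theorem zpow_twistExponent_add (hM : Odd M.det) (hq : q ^ M.det = q) (γ γ' : Fin 2 → ℤ) :
    q ^ (γ 0 * γ' 1) * q ^ twistExponent M (γ + γ') =
      q ^ twistExponent M γ * q ^ twistExponent M γ' * q ^ ((M *ᵥ γ) 0 * (M *ᵥ γ') 1) := by
  have hβ : q ^ (M.det * (γ 0 * γ' 1)) = q ^ (γ 0 * γ' 1) := by rw [_root_.zpow_mul, hq]
  rw [← hβ, ← _root_.zpow_add, ← _root_.zpow_add, ← _root_.zpow_add, add_comm,
    twistExponent_add hM]

theorem zpow_twistExponent_mul (hM : Odd M.det) (hq : q ^ M.det = q)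
    {N : Matrix (Fin 2) (Fin 2) ℤ} (hN : Odd N.det) (γ : Fin 2 → ℤ) :
    q ^ twistExponent (M * N) γ = q ^ twistExponent N γ * q ^ twistExponent M (N *ᵥ γ) := by
  rw [twistExponent_mul hM hN, _root_.zpow_add, _root_.zpow_mul, hq]

end ZPow

theorem zpow_det_eq_self_of_forall_zpow_eq {G : Type*} [Group G] (q : G)
    (M : Matrix (Fin 2) (Fin 2) ℤ)
    (hM : ∀ a c : Fin 2 → ℤ,
      q ^ ((M *ᵥ a) 0 * (M *ᵥ c) 1 - (M *ᵥ a) 1 * (M *ᵥ c) 0) = q ^ (a 0 * c 1 - a 1 * c 0)) :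
    q ^ M.det = q := by
  simpa [mulVec_fin_two_apply, det_fin_two, mul_comm] using hM ![1, 0] ![0, 1]

theorem odd_det_units (g : (Matrix (Fin 2) (Fin 2) ℤ)ˣ) :
    Odd (g : Matrix (Fin 2) (Fin 2) ℤ).det :=
  Int.natAbs_odd.mp (by rw [Int.isUnit_iff_natAbs_eq.mp (isUnits_det_units g)]; exact odd_one)

/-- For any field `𝕂` and `q ∈ 𝕂ˣ`, the exact sequence
`1 → Hom(ℤ², 𝕂ˣ) → Aut(A_q) → Aut(ℤ², λ) → 1` splits: there is a group homomorphism
`σ : Aut(ℤ², λ) → Aut(A_q)` such that `σ(g)` maps the basis vector `δ_γ` of the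
quantum torus `A_q` into `𝕂ˣ · δ_{gγ}`, i.e. `σ` is a homomorphic section of the
projection `Aut(A_q) → Aut(ℤ², λ)`. Here `A_q` is presented by a `𝕂`-basis
`(δ_γ)_{γ ∈ ℤ²}` with `δ_γ δ_{γ'} = q^{γ₁γ₂'} δ_{γ+γ'}`, and
`λ(γ,γ') = q^{γ₁γ₂' − γ₂γ₁'}`. -/
theorem aut_sequence_of_quantum_torus_splits
    {K : Type*} [Field K] (q : Kˣ)
    {A : Type*} [Ring A] [Algebra K A]
    (b : Module.Basis (Fin 2 → ℤ) K A)
    (hb : ∀ γ γ' : Fin 2 → ℤ,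
      b γ * b γ' = ((q ^ (γ 0 * γ' 1) : Kˣ) : K) • b (γ + γ'))
    (H : Subgroup (Matrix (Fin 2) (Fin 2) ℤ)ˣ)
    (hH : ∀ g : (Matrix (Fin 2) (Fin 2) ℤ)ˣ, g ∈ H ↔
      ∀ a c : Fin 2 → ℤ,
        (q ^ (((↑g : Matrix (Fin 2) (Fin 2) ℤ).mulVec a 0) *
              ((↑g : Matrix (Fin 2) (Fin 2) ℤ).mulVec c 1) -
              ((↑g : Matrix (Fin 2) (Fin 2) ℤ).mulVec a 1) *
              ((↑g : Matrix (Fin 2) (Fin 2) ℤ).mulVec c 0)) : Kˣ)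
          = q ^ (a 0 * c 1 - a 1 * c 0)) :
    ∃ σ : H →* (A ≃ₐ[K] A),
      ∀ (g : H) (γ : Fin 2 → ℤ), ∃ c : Kˣ,
        (σ g) (b γ) = (c : K) • b ((↑(↑g : (Matrix (Fin 2) (Fin 2) ℤ)ˣ) :
          Matrix (Fin 2) (Fin 2) ℤ).mulVec γ) := by
  -- `g • γ` unfolds to `↑↑g *ᵥ γ`
  let _ : DistribMulAction H (Fin 2 → ℤ) :=
    DistribMulAction.compHom _ (GeneralLinearGroup.toLin.toMonoidHom.comp H.subtype)
  have hdet (g : H) : q ^ g.1.1.det = q :=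
    zpow_det_eq_self_of_forall_zpow_eq q _ ((hH g).mp g.2)
  have hodd (g : H) := odd_det_units g
  let χ (g : H) (γ : Fin 2 → ℤ) : Kˣ := q ^ twistExponent g.1.1 γ
  have hχ_mul (g : H) (γ γ' : Fin 2 → ℤ) :
      q ^ (γ 0 * γ' 1) * χ g (γ + γ') = χ g γ * χ g γ' * q ^ ((g • γ) 0 * (g • γ') 1) :=
    zpow_twistExponent_add (hodd g) (hdet g) γ γ'
  have hχ_cocycle (g h : H) (γ : Fin 2 → ℤ) : χ (g * h) γ = χ h γ * χ g (h • γ) :=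
    zpow_twistExponent_mul (hodd g) (hdet g) (hodd h) γ
  exact ⟨twistedAut b hb hχ_mul hχ_cocycle, fun g γ => ⟨χ g γ, twistedAut_basis ..⟩⟩
end
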